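/- If the true one-step transition probabilities T(x,a,q') of a continuous-state system satisfy P̌(q,a,q') ≤ T(x,a,q') ≤ P̂(q,a,q') for all x in region q (i.e., the IMDP abstraction is sound), then for any finite horizon k and any stationary policy π defined on abstract states, the probability that the continuous system reaches a set of bad regions within k steps is at most the maximum over adversaries of the corresponding k-step reachability probability in the IMDP under π. -/

import Mathlib

/-!
The concrete reachability value of `y` is an expectation under `T y a`; grouping the
successors of `y` by region rewrites it, via the induction hypothesis, as an expectation of
the abstract value under the pushed-forward distribution on regions. Soundness says exactly
that this distribution is one of the adversary's admissible choices, so the supremum over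
adversaries dominates it.
-/

open Finset

/-- `k`-step probability that the concrete system (state space `Y`, kernel `T`),
controlled by abstract policy `π` lifted through projection `ρ`, reaches a bad
abstract region in `B`. -/
noncomputable def creach {Y Q U : Type*} [Fintype Y] (B : Set Q) [DecidablePred (· ∈ B)]
    (ρ : Y → Q) (T : Y → U → Y → ℝ) (π : Q → U) : ℕ → Y → ℝ
  | 0 => fun y => if ρ y ∈ B then 1 else 0
  | k + 1 => fun y => if ρ y ∈ B then 1 else
      ∑ y', T y (π (ρ y)) y' * creach B ρ T π k y'

/-- `k`-step worst-case (over adversaries) probability of reaching `B` in the IMDP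
abstraction with interval bounds `Pl, Ph` under policy `π`. -/
noncomputable def areach {Q U : Type*} [Fintype Q] (B : Set Q) [DecidablePred (· ∈ B)]
    (Pl Ph : Q → U → Q → ℝ) (π : Q → U) : ℕ → Q → ℝ
  | 0 => fun q => if q ∈ B then 1 else 0
  | k + 1 => fun q => if q ∈ B then 1 else
      sSup {r | ∃ d : Q → ℝ,
        (∀ q', Pl q (π q) q' ≤ d q' ∧ d q' ≤ Ph q (π q) q') ∧ (∑ q', d q' = 1) ∧
        r = ∑ q', d q' * areach B Pl Ph π k q'}

lemma Finset.sum_mul_comp_eq_sum_fiber {Y Q R : Type*} [Fintype Y] [Fintype Q] [DecidableEq Q]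
    [NonUnitalNonAssocSemiring R] (ρ : Y → Q) (w : Y → R) (f : Q → R) :
    ∑ y, w y * f (ρ y) = ∑ q, (∑ y ∈ univ.filter (fun y => ρ y = q), w y) * f q := by
  rw [← sum_fiberwise univ ρ]
  refine sum_congr rfl fun q _ => ?_
  rw [sum_mul]
  exact sum_congr rfl fun y hy => by rw [(mem_filter.mp hy).2]

lemma mul_le_max_of_mem_Icc {l h d v : ℝ} (hl : l ≤ d) (hh : d ≤ h) :
    d * v ≤ max (l * v) (h * v) := by
  rcases le_total 0 v with hv | hv
  · exact (mul_le_mul_of_nonneg_right hh hv).trans (le_max_right _ _)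
  · exact (mul_le_mul_of_nonpos_right hl hv).trans (le_max_left _ _)

lemma bddAbove_sum_mul_of_mem_Icc {ι : Type*} [Fintype ι] (l h v : ι → ℝ) :
    BddAbove {r | ∃ d : ι → ℝ, (∀ i, l i ≤ d i ∧ d i ≤ h i) ∧ r = ∑ i, d i * v i} := by
  refine ⟨∑ i, max (l i * v i) (h i * v i), ?_⟩
  rintro r ⟨d, hd, rfl⟩
  exact sum_le_sum fun i _ => mul_le_max_of_mem_Icc (hd i).1 (hd i).2

section Reachability

variable {Y Q U : Type*} {B : Set Q} [DecidablePred (· ∈ B)]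

lemma creach_succ_of_notMem [Fintype Y] {ρ : Y → Q} {T : Y → U → Y → ℝ} {π : Q → U}
    {k : ℕ} {y : Y} (hy : ρ y ∉ B) :
    creach B ρ T π (k + 1) y = ∑ y', T y (π (ρ y)) y' * creach B ρ T π k y' := by
  rw [creach]
  exact if_neg hy

lemma le_areach_succ [Fintype Q] {Pl Ph : Q → U → Q → ℝ} {π : Q → U} {k : ℕ} {q : Q}
    (hq : q ∉ B) {d : Q → ℝ} (hd : ∀ q', Pl q (π q) q' ≤ d q' ∧ d q' ≤ Ph q (π q) q')
    (hd_sum : ∑ q', d q' = 1) :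
    ∑ q', d q' * areach B Pl Ph π k q' ≤ areach B Pl Ph π (k + 1) q := by
  rw [areach]
  dsimp only
  rw [if_neg hq]
  refine le_csSup ((bddAbove_sum_mul_of_mem_Icc (Pl q (π q)) (Ph q (π q))
    (areach B Pl Ph π k)).mono ?_) ⟨d, hd, hd_sum, rfl⟩
  rintro r ⟨e, he, -, rfl⟩
  exact ⟨e, he, rfl⟩

end Reachability

theorem sound_abstraction_upper_bounds_reachability
    {Y Q U : Type*} [Fintype Y] [Fintype Q] [DecidableEq Q]
    (B : Set Q) [DecidablePred (· ∈ B)]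
    (ρ : Y → Q) (T : Y → U → Y → ℝ)
    (hT : ∀ y a, (∀ y', 0 ≤ T y a y') ∧ ∑ y', T y a y' = 1)
    (Pl Ph : Q → U → Q → ℝ)
    (hsound : ∀ (y : Y) (a : U) (q' : Q),
      Pl (ρ y) a q' ≤ ∑ y' ∈ Finset.univ.filter (fun y' => ρ y' = q'), T y a y' ∧
      ∑ y' ∈ Finset.univ.filter (fun y' => ρ y' = q'), T y a y' ≤ Ph (ρ y) a q')
    (π : Q → U) :
    ∀ (k : ℕ) (y : Y), creach B ρ T π k y ≤ areach B Pl Ph π k (ρ y) := by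
  intro k
  induction k with
  | zero => intro y; simp [creach, areach]
  | succ k ih =>
    intro y
    by_cases hy : ρ y ∈ B
    · simp [creach, areach, hy]
    set a := π (ρ y)
    set d : Q → ℝ := fun q' => ∑ y' ∈ univ.filter (fun y' => ρ y' = q'), T y a y'
    have hd_sum : ∑ q', d q' = 1 := by
      rw [sum_fiberwise univ ρ (T y a)]
      exact (hT y a).2
    calc creach B ρ T π (k + 1) y = ∑ y', T y a y' * creach B ρ T π k y' :=
          creach_succ_of_notMem hy
      _ ≤ ∑ y', T y a y' * areach B Pl Ph π k (ρ y') :=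
          sum_le_sum fun y' _ => mul_le_mul_of_nonneg_left (ih y') ((hT y a).1 y')
      _ = ∑ q', d q' * areach B Pl Ph π k q' := sum_mul_comp_eq_sum_fiber ρ _ _
      _ ≤ areach B Pl Ph π (k + 1) (ρ y) := le_areach_succ hy (hsound y a) hd_sum
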